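/- (Per-clone fidelity of the optimal qubit cloner) Define Λ(ρ) = (1/3)·ρ⊗ρ + (1/6)·ρ⊗1₂ + (1/6)·1₂⊗ρ for 2×2 complex matrices ρ. Then for every rank-one orthogonal projector ρ on ℂ², one has Tr[(ρ⊗1₂)·Λ(ρ)] = 5/6 and Tr[(1₂⊗ρ)·Λ(ρ)] = 5/6; in particular each individual clone produced by Λ passes a measurement against the original state with probability exactly 5/6. -/

import Mathlib

open Matrix Kronecker

/-- The optimal 1→2 qubit cloning map,
`Λ(ρ) = (1/3)·ρ⊗ρ + (1/6)·ρ⊗1₂ + (1/6)·1₂⊗ρ`. -/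
noncomputable def cloner (ρ : Matrix (Fin 2) (Fin 2) ℂ) :
    Matrix (Fin 2 × Fin 2) (Fin 2 × Fin 2) ℂ :=
  ((1 : ℂ)/3) • (ρ ⊗ₖ ρ) + ((1 : ℂ)/6) • (ρ ⊗ₖ (1 : Matrix (Fin 2) (Fin 2) ℂ)) +
    ((1 : ℂ)/6) • ((1 : Matrix (Fin 2) (Fin 2) ℂ) ⊗ₖ ρ)

theorem Matrix.trace_kronecker_mul_kronecker {R l m : Type*} [CommRing R] [Fintype l]
    [Fintype m] (A C : Matrix l l R) (B D : Matrix m m R) :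
    trace ((A ⊗ₖ B) * (C ⊗ₖ D)) = trace (A * C) * trace (B * D) := by
  rw [← mul_kronecker_mul, trace_kronecker]

section cloner

variable {ρ : Matrix (Fin 2) (Fin 2) ℂ}

theorem trace_kronecker_one_mul_cloner (hidem : ρ * ρ = ρ) :
    trace ((ρ ⊗ₖ (1 : Matrix (Fin 2) (Fin 2) ℂ)) * cloner ρ) = ρ.trace ^ 2 / 2 + ρ.trace / 3 := by
  simp only [cloner, Matrix.mul_add, Matrix.mul_smul, trace_add, trace_smul,
    trace_kronecker_mul_kronecker, hidem, Matrix.mul_one, Matrix.one_mul, trace_one,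
    Fintype.card_fin, smul_eq_mul]
  push_cast
  ring

theorem trace_one_kronecker_mul_cloner (hidem : ρ * ρ = ρ) :
    trace (((1 : Matrix (Fin 2) (Fin 2) ℂ) ⊗ₖ ρ) * cloner ρ) = ρ.trace ^ 2 / 2 + ρ.trace / 3 := by
  simp only [cloner, Matrix.mul_add, Matrix.mul_smul, trace_add, trace_smul,
    trace_kronecker_mul_kronecker, hidem, Matrix.mul_one, Matrix.one_mul, trace_one,
    Fintype.card_fin, smul_eq_mul]
  push_cast
  ring

end cloner

theorem cloner_per_clone_fidelity_general (ρ : Matrix (Fin 2) (Fin 2) ℂ)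
    (hidem : ρ * ρ = ρ) (htr : ρ.trace = 1) :
    Matrix.trace ((ρ ⊗ₖ (1 : Matrix (Fin 2) (Fin 2) ℂ)) * cloner ρ) = 5/6 ∧
    Matrix.trace (((1 : Matrix (Fin 2) (Fin 2) ℂ) ⊗ₖ ρ) * cloner ρ) = 5/6 := by
  rw [trace_kronecker_one_mul_cloner hidem, trace_one_kronecker_mul_cloner hidem, htr]
  norm_num

/-- Per-clone fidelity of the optimal qubit cloner: for every rank-one orthogonal
projector `ρ` on `ℂ²`, each individual clone produced by `Λ` passes a measurement
against the original state with probability exactly `5/6`. -/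
theorem cloner_per_clone_fidelity (ρ : Matrix (Fin 2) (Fin 2) ℂ)
    (hherm : ρ.IsHermitian) (hidem : ρ * ρ = ρ) (htr : ρ.trace = 1) :
    Matrix.trace ((ρ ⊗ₖ (1 : Matrix (Fin 2) (Fin 2) ℂ)) * cloner ρ) = 5/6 ∧
    Matrix.trace (((1 : Matrix (Fin 2) (Fin 2) ℂ) ⊗ₖ ρ) * cloner ρ) = 5/6 :=
  cloner_per_clone_fidelity_general ρ hidem htr
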